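/- For every natural number n and every complex number x, A_n(x) = ((2i)^{n+1}/(n+1))·( B_{n+1}((x+i)/(2i)) − B_{n+1}(1/2) ). -/

import Mathlib

open Polynomial Finset

/-- The pair of polynomial sequences (Aₙ, Cₙ) from the paper:
A₀ = X, C₀ = 0, and
A_{n+1} = ((n+1)/(n+2))·(X·Aₙ + ∑_{k=0}^{n} λₙᵏ·A_k),
C_{n+1} = ((n+1)/(n+2))·((X²+1)·Xⁿ + ∑_{k=0}^{n} λₙᵏ·C_k),
where λₙᵏ is the coefficient of Xᵏ in Cₙ. -/
noncomputable def AC : ℕ → Polynomial ℂ × Polynomial ℂ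
  | 0 => (Polynomial.X, 0)
  | (n+1) =>
    (((n+1 : ℂ)/(n+2)) • (Polynomial.X * (AC n).1 +
        ∑ k ∈ (Finset.range (n+1)).attach, ((AC n).2.coeff k) • (AC k).1),
     ((n+1 : ℂ)/(n+2)) • ((Polynomial.X^2 + 1) * Polynomial.X^n +
        ∑ k ∈ (Finset.range (n+1)).attach, ((AC n).2.coeff k) • (AC k).2))
  decreasing_by
  all_goals first
    | exact Nat.lt_succ_self n
    | exact Nat.lt_succ_of_lt (Finset.mem_range.mp k.2)
    | exact Finset.mem_range.mp k.2

noncomputable def polyA (n : ℕ) : Polynomial ℂ := (AC n).1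
noncomputable def polyC (n : ℕ) : Polynomial ℂ := (AC n).2

/-!
Write `D_h P = (P(X + h) - P(X - h)) / (2h)` and `S_h P = (P(X + h) + P(X - h)) / 2`; they satisfy
the Leibniz-type rules `D_h (X P) = X D_h P + S_h P` and `S_h (X P) = X S_h P + h² D_h P`, and in
characteristic zero a polynomial is determined by `D_h P` and `P(0)`. The difference equation of the
Bernoulli polynomials makes `F_n = (2h)^(n+1)/(n+1) (B_{n+1}((X + h)/(2h)) - B_{n+1}(1/2))` the
solution of `D_h F_n = Xⁿ`, `F_n(0) = 0`. For `h = i`, strong induction shows `A_n = F_n` and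
`C_n = X^(n+1) - S_h F_n`: applying `D_h` to `∑ₖ λₙᵏ F_k` gives back `C_n`, which identifies the sum
with `2 F_{n+1} - X F_n`, and the top coefficient `λₙ^(n+1) = 1 - 1/(n+1)` accounts for the
normalising factor `(n+1)/(n+2)`.
-/

lemma div_smul_add_sum_range_eq {K V : Type*} [Field K] [CharZero K] [AddCommGroup V]
    [Module K V] {m : ℕ} {c : ℕ → K} {T : ℕ → V} {Y : V} (hc : c (m + 1) = 1 - (m + 1 : K)⁻¹)
    (hsum : ∑ k ∈ range (m + 2), c k • T k = (2 : K) • T (m + 1) - Y) :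
    ((m + 1 : K) / (m + 2)) • (Y + ∑ k ∈ range (m + 1), c k • T k) = T (m + 1) := by
  rw [sum_range_succ, hc] at hsum
  have hY : Y + ∑ k ∈ range (m + 1), c k • T k = (1 + (m + 1 : K)⁻¹) • T (m + 1) := by
    rw [eq_sub_of_add_eq hsum]
    module
  have hm : (m + 1 : K) ≠ 0 := by exact_mod_cast m.succ_ne_zero
  have hm2 : (m + 2 : K) ≠ 0 := by exact_mod_cast (m + 1).succ_ne_zero
  rw [hY, smul_smul, show (m + 1 : K) / (m + 2) * (1 + (m + 1 : K)⁻¹) = 1 by field_simp; ring,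
    one_smul]

namespace Polynomial

variable {K : Type*} [Field K]

noncomputable def centralDiff (h : K) : K[X] →ₗ[K] K[X] := (2 * h)⁻¹ • (taylor h - taylor (-h))

noncomputable def centralMean (h : K) : K[X] →ₗ[K] K[X] := (2 : K)⁻¹ • (taylor h + taylor (-h))

variable {h : K}

lemma centralDiff_apply (h : K) (P : K[X]) :
    centralDiff h P = C (2 * h)⁻¹ * (taylor h P - taylor (-h) P) := by
  simp [centralDiff, smul_eq_C_mul, mul_sub]

lemma centralMean_apply (h : K) (P : K[X]) :
    centralMean h P = C (2 : K)⁻¹ * (taylor h P + taylor (-h) P) := by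
  simp [centralMean, smul_eq_C_mul, mul_add]

@[simp] lemma centralDiff_C (h a : K) : centralDiff h (C a) = 0 := by
  simp [centralDiff_apply]

@[simp] lemma centralMean_C [NeZero (2 : K)] (h a : K) : centralMean h (C a) = C a := by
  rw [centralMean_apply, taylor_C, taylor_C, ← two_mul, ← mul_assoc, ← C_ofNat, ← C_mul,
    inv_mul_cancel₀ two_ne_zero, C_1, one_mul]

lemma eval_centralDiff (h : K) (P : K[X]) (x : K) :
    (centralDiff h P).eval x = (P.eval (x + h) - P.eval (x - h)) / (2 * h) := by
  simp [centralDiff_apply, taylor_eval, sub_eq_add_neg, div_eq_inv_mul]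

lemma centralDiff_X_mul [NeZero (2 : K)] (hh : h ≠ 0) (P : K[X]) :
    centralDiff h (X * P) = X * centralDiff h P + centralMean h P := by
  have : C (2 * h)⁻¹ * C h = (C 2⁻¹ : K[X]) := by rw [← C_mul]; congr 1; field_simp
  simp only [centralDiff_apply, centralMean_apply, taylor_mul, taylor_X, C_neg]
  linear_combination (taylor h P + taylor (-h) P) * this

lemma centralMean_X_mul [NeZero (2 : K)] (hh : h ≠ 0) (P : K[X]) :
    centralMean h (X * P) = X * centralMean h P + C (h ^ 2) * centralDiff h P := by
  have : C 2⁻¹ * C h = (C (h ^ 2) * C (2 * h)⁻¹ : K[X]) := by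
    simp only [← C_mul]; congr 1; field_simp
  simp only [centralDiff_apply, centralMean_apply, taylor_mul, taylor_X, C_neg]
  linear_combination (taylor h P - taylor (-h) P) * this

lemma centralDiff_X [NeZero (2 : K)] (hh : h ≠ 0) : centralDiff h X = 1 := by
  have := centralDiff_X_mul hh 1
  rwa [mul_one, ← C_1, centralDiff_C, centralMean_C, C_1, mul_zero, zero_add] at this

lemma centralMean_X [NeZero (2 : K)] (hh : h ≠ 0) : centralMean h X = X := by
  have := centralMean_X_mul hh 1
  rwa [mul_one, ← C_1, centralDiff_C, centralMean_C, C_1, mul_zero, add_zero, mul_one] at this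

lemma coeff_centralMean_of_natDegree_le [NeZero (2 : K)] {P : K[X]} {d : ℕ}
    (hP : P.natDegree ≤ d) : (centralMean h P).coeff d = P.coeff d := by
  have coeff_taylor_eq (r : K) : (taylor r P).coeff d = P.coeff d := by
    rcases hP.lt_or_eq with hlt | rfl
    · rw [coeff_eq_zero_of_natDegree_lt hlt, coeff_eq_zero_of_natDegree_lt]
      rwa [natDegree_taylor]
    · exact coeff_taylor_natDegree (r := r) (f := P)
  rw [centralMean_apply, coeff_C_mul, coeff_add, coeff_taylor_eq, coeff_taylor_eq, ← two_mul,
    ← mul_assoc, inv_mul_cancel₀ two_ne_zero, one_mul]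

lemma natDegree_centralMean_le {P : K[X]} {d : ℕ} (hP : P.natDegree ≤ d) :
    (centralMean h P).natDegree ≤ d := by
  rw [centralMean_apply]
  refine (natDegree_C_mul_le _ _).trans ((natDegree_add_le _ _).trans ?_)
  simpa [natDegree_taylor] using hP

lemma eq_C_eval_zero_of_centralDiff_eq_zero [CharZero K] (hh : h ≠ 0) {P : K[X]}
    (hP : centralDiff h P = 0) : P = C (P.eval 0) := by
  have periodic (x : K) : P.eval (x + 2 * h) = P.eval x := by
    have := congrArg (eval (x + h)) hP
    rw [eval_centralDiff, eval_zero, div_eq_zero_iff, sub_eq_zero] at this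
    simpa [two_mul, add_assoc, hh] using this
  have eval_nat_mul (m : ℕ) : P.eval (m * (2 * h)) = P.eval 0 := by
    induction m with
    | zero => simp
    | succ m ih => rw [Nat.cast_succ, add_one_mul, periodic, ih]
  rw [← sub_eq_zero]
  apply eq_zero_of_infinite_isRoot
  refine Set.infinite_of_injective_forall_mem (f := fun m : ℕ => m * (2 * h)) ?_ ?_
  · intro a b hab
    simpa [hh] using hab
  · intro m
    simp [eval_nat_mul]

lemma eq_of_centralDiff_eq [CharZero K] (hh : h ≠ 0) {P Q : K[X]}
    (hD : centralDiff h P = centralDiff h Q) (h0 : P.eval 0 = Q.eval 0) : P = Q := by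
  have := eq_C_eval_zero_of_centralDiff_eq_zero hh (P := P - Q) (by rw [map_sub, hD, sub_self])
  rwa [eval_sub, h0, sub_self, C_0, sub_eq_zero] at this

lemma coeff_bernoulli_self (n : ℕ) : (bernoulli n).coeff n = 1 := by
  simp [coeff_bernoulli]

lemma natDegree_bernoulli (n : ℕ) : (bernoulli n).natDegree = n := by
  refine natDegree_eq_of_le_of_coeff_ne_zero ?_ (by simp [coeff_bernoulli_self])
  exact natDegree_le_iff_coeff_eq_zero.2 fun i hi => by simp [coeff_bernoulli, not_le.2 hi]

lemma monic_bernoulli (n : ℕ) : (bernoulli n).Monic :=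
  monic_of_natDegree_le_of_coeff_eq_one n (natDegree_bernoulli n).le (coeff_bernoulli_self n)

lemma aeval_one_add_bernoulli {A : Type*} [CommRing A] [Algebra ℚ A] (n : ℕ) (y : A) :
    aeval (1 + y) (bernoulli n) = aeval y (bernoulli n) + n * y ^ (n - 1) := by
  simpa [aeval_comp] using congrArg (aeval y) (bernoulli_comp_one_add_X n)

section Antiderivative

variable [CharZero K]

noncomputable def centralAntideriv (h : K) (n : ℕ) : K[X] :=
  C ((2 * h) ^ (n + 1) / (n + 1)) *
    (((bernoulli (n + 1)).map (algebraMap ℚ K)).comp ((X + C h) * C (2 * h)⁻¹) -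
      C (aeval (1 / 2 : K) (bernoulli (n + 1))))

lemma eval_centralAntideriv (h : K) (n : ℕ) (x : K) :
    (centralAntideriv h n).eval x = (2 * h) ^ (n + 1) / (n + 1) *
      (aeval ((x + h) / (2 * h)) (bernoulli (n + 1)) - aeval (1 / 2 : K) (bernoulli (n + 1))) := by
  simp [centralAntideriv, eval_map_algebraMap, div_eq_mul_inv]

lemma centralAntideriv_eval_zero (hh : h ≠ 0) (n : ℕ) : (centralAntideriv h n).eval 0 = 0 := by
  rw [eval_centralAntideriv, zero_add, div_mul_cancel_right₀ hh, one_div, sub_self, mul_zero]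

lemma centralDiff_centralAntideriv (hh : h ≠ 0) (n : ℕ) :
    centralDiff h (centralAntideriv h n) = X ^ n := by
  refine Polynomial.funext fun x => ?_
  have shift : (x + h + h) / (2 * h) = 1 + (x - h + h) / (2 * h) := by field_simp; ring
  rw [eval_centralDiff, eval_centralAntideriv, eval_centralAntideriv, shift,
    aeval_one_add_bernoulli, sub_add_cancel, eval_pow, eval_X]
  push_cast
  rw [div_pow, mul_pow]
  field_simp
  ring

lemma natDegree_centralAntideriv_le (h : K) (n : ℕ) :
    (centralAntideriv h n).natDegree ≤ n + 1 := by
  have hq : ((X + C h) * C (2 * h)⁻¹).natDegree ≤ 1 :=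
    (natDegree_mul_C_le _ _).trans (natDegree_X_add_C h).le
  refine (natDegree_C_mul_le _ _).trans ?_
  rw [natDegree_sub_C]
  refine natDegree_comp_le.trans ?_
  rw [natDegree_map, natDegree_bernoulli]
  simpa using Nat.mul_le_mul_left (n + 1) hq

lemma coeff_centralAntideriv_succ (hh : h ≠ 0) (n : ℕ) :
    (centralAntideriv h n).coeff (n + 1) = (n + 1 : K)⁻¹ := by
  have h2 : 2 * h ≠ 0 := mul_ne_zero two_ne_zero hh
  have hc : (2 * h)⁻¹ ≠ 0 := inv_ne_zero h2
  have hq : ((X + C h) * C (2 * h)⁻¹).natDegree = 1 := by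
    rw [natDegree_mul_C hc, natDegree_X_add_C]
  have hB : ((bernoulli (n + 1)).map (algebraMap ℚ K)).natDegree = n + 1 := by
    rw [natDegree_map, natDegree_bernoulli]
  have top := coeff_comp_degree_mul_degree (p := (bernoulli (n + 1)).map (algebraMap ℚ K))
    (hq.symm ▸ one_ne_zero)
  rw [hB, hq, mul_one, ((monic_bernoulli _).map _).leadingCoeff, one_mul, leadingCoeff_mul,
    leadingCoeff_X_add_C, leadingCoeff_C, one_mul] at top
  rw [centralAntideriv, coeff_C_mul, coeff_sub, top, coeff_C, if_neg n.succ_ne_zero, sub_zero,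
    div_mul_eq_mul_div, ← mul_pow, mul_inv_cancel₀ h2, one_pow, one_div]

lemma centralAntideriv_zero (hh : h ≠ 0) : centralAntideriv h 0 = X :=
  eq_of_centralDiff_eq hh (by rw [centralDiff_centralAntideriv hh, pow_zero, centralDiff_X hh])
    (by rw [centralAntideriv_eval_zero hh, eval_X])

noncomputable def centralCompanion (h : K) (n : ℕ) : K[X] :=
  X ^ (n + 1) - centralMean h (centralAntideriv h n)

lemma centralCompanion_zero (hh : h ≠ 0) : centralCompanion h 0 = 0 := by
  rw [centralCompanion, centralAntideriv_zero hh, zero_add, pow_one, centralMean_X hh, sub_self]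

lemma natDegree_centralCompanion_le (h : K) (n : ℕ) :
    (centralCompanion h n).natDegree ≤ n + 1 :=
  (natDegree_sub_le _ _).trans <| max_le (natDegree_X_pow_le _)
    (natDegree_centralMean_le (natDegree_centralAntideriv_le h n))

lemma coeff_centralCompanion_succ (hh : h ≠ 0) (n : ℕ) :
    (centralCompanion h n).coeff (n + 1) = 1 - (n + 1 : K)⁻¹ := by
  rw [centralCompanion, coeff_sub, coeff_X_pow_self,
    coeff_centralMean_of_natDegree_le (natDegree_centralAntideriv_le h n),
    coeff_centralAntideriv_succ hh]

lemma sum_coeff_centralCompanion_smul_X_pow (h : K) (n : ℕ) :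
    ∑ k ∈ range (n + 2), (centralCompanion h n).coeff k • X ^ k = centralCompanion h n := by
  conv_rhs => rw [as_sum_range' _ (n + 2) (Nat.lt_succ_of_le (natDegree_centralCompanion_le h n))]
  simp [smul_X_eq_monomial]

lemma sum_coeff_centralCompanion_smul_centralAntideriv (hh : h ≠ 0) (n : ℕ) :
    ∑ k ∈ range (n + 2), (centralCompanion h n).coeff k • centralAntideriv h k =
      (2 : K) • centralAntideriv h (n + 1) - X * centralAntideriv h n := by
  refine eq_of_centralDiff_eq hh ?_ ?_
  · simp only [map_sum, map_smul, centralDiff_centralAntideriv hh]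
    rw [sum_coeff_centralCompanion_smul_X_pow, map_sub, map_smul, centralDiff_X_mul hh,
      centralDiff_centralAntideriv hh, centralDiff_centralAntideriv hh, centralCompanion, two_smul,
      pow_succ']
    abel
  · simp [eval_finsetSum, centralAntideriv_eval_zero hh]

lemma sum_coeff_centralCompanion_smul_centralCompanion (hh : h ≠ 0) (n : ℕ) :
    ∑ k ∈ range (n + 2), (centralCompanion h n).coeff k • centralCompanion h k =
      (2 : K) • centralCompanion h (n + 1) - (X ^ 2 - C (h ^ 2)) * X ^ n := by
  have split (a : K) (k : ℕ) : a • centralCompanion h k =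
      X * (a • X ^ k) - centralMean h (a • centralAntideriv h k) := by
    rw [centralCompanion, map_smul, smul_sub, mul_smul_comm, pow_succ']
  rw [sum_congr rfl fun k _ => split _ k, sum_sub_distrib, ← mul_sum, ← map_sum,
    sum_coeff_centralCompanion_smul_X_pow, sum_coeff_centralCompanion_smul_centralAntideriv hh,
    map_sub, map_smul, centralMean_X_mul hh, centralDiff_centralAntideriv hh]
  simp only [centralCompanion, smul_sub]
  rw [two_smul, two_smul]
  ring

end Antiderivative

end Polynomial

lemma polyA_succ (n : ℕ) : polyA (n + 1) = ((n + 1 : ℂ) / (n + 2)) •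
    (X * polyA n + ∑ k ∈ range (n + 1), (polyC n).coeff k • polyA k) := by
  rw [← sum_attach (range (n + 1)) fun k => (polyC n).coeff k • polyA k, polyA, AC]
  rfl

lemma polyC_succ (n : ℕ) : polyC (n + 1) = ((n + 1 : ℂ) / (n + 2)) •
    ((X ^ 2 + 1) * X ^ n + ∑ k ∈ range (n + 1), (polyC n).coeff k • polyC k) := by
  rw [← sum_attach (range (n + 1)) fun k => (polyC n).coeff k • polyC k, polyC, AC]
  rfl

lemma polyA_eq_and_polyC_eq (n : ℕ) :
    polyA n = centralAntideriv Complex.I n ∧ polyC n = centralCompanion Complex.I n := by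
  induction n using Nat.strong_induction_on with
  | _ n ih =>
    rcases n with _ | m
    · rw [polyA, polyC, AC, centralAntideriv_zero Complex.I_ne_zero,
        centralCompanion_zero Complex.I_ne_zero]
      exact ⟨rfl, rfl⟩
    · have ih' (k : ℕ) (hk : k ∈ range (m + 1)) := ih k (mem_range.1 hk)
      refine ⟨?_, ?_⟩
      · rw [polyA_succ, (ih' m (self_mem_range_succ m)).1, (ih' m (self_mem_range_succ m)).2,
          sum_congr rfl fun k hk => by rw [(ih' k hk).1]]
        exact div_smul_add_sum_range_eq (coeff_centralCompanion_succ Complex.I_ne_zero m)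
          (sum_coeff_centralCompanion_smul_centralAntideriv Complex.I_ne_zero m)
      · have hX : (X ^ 2 + 1 : ℂ[X]) = X ^ 2 - C (Complex.I ^ 2) := by
          rw [Complex.I_sq, C_neg, C_1, sub_neg_eq_add]
        rw [polyC_succ, (ih' m (self_mem_range_succ m)).2, hX,
          sum_congr rfl fun k hk => by rw [(ih' k hk).2]]
        exact div_smul_add_sum_range_eq (coeff_centralCompanion_succ Complex.I_ne_zero m)
          (sum_coeff_centralCompanion_smul_centralCompanion Complex.I_ne_zero m)

theorem stmt4 (n : ℕ) (x : ℂ) :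
    (polyA n).eval x =
      ((2 * Complex.I) ^ (n + 1) / (n + 1)) *
        (Polynomial.aeval ((x + Complex.I) / (2 * Complex.I)) (Polynomial.bernoulli (n + 1)) -
          Polynomial.aeval ((1 : ℂ) / 2) (Polynomial.bernoulli (n + 1))) := by
  rw [(polyA_eq_and_polyC_eq n).1, eval_centralAntideriv]
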